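/- For any τ > 0: if W is a substochastic n×n matrix, then K(τ,W) is a subgenerator and H(τ,W)1 ≤ 0; if W is stochastic, then K(τ,W) is a generator. -/

import Mathlib

open MeasureTheory Matrix Filter

noncomputable section

/-- Entrywise Bochner integral over `(0,∞)` of a matrix-valued function. -/
def intP {n : ℕ} (f : ℝ → Matrix (Fin n) (Fin n) ℝ) : Matrix (Fin n) (Fin n) ℝ :=
  Matrix.of fun i j => ∫ x in Set.Ioi (0:ℝ), f x i j

/-- Matrix exponential. -/
def mexp {n : ℕ} (A : Matrix (Fin n) (Fin n) ℝ) : Matrix (Fin n) (Fin n) ℝ :=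
  NormedSpace.exp A

/-- `∫_0^x e^{Gs} ds` (entrywise). -/
def cumExp {n : ℕ} (G : Matrix (Fin n) (Fin n) ℝ) (x : ℝ) : Matrix (Fin n) (Fin n) ℝ :=
  Matrix.of fun i j => ∫ s in (0:ℝ)..x, mexp (s • G) i j

/-- Irreducibility of a square matrix: for all `i ≠ j` there is a path from `i` to `j`
along nonzero entries. -/
def MatIrr {m : Type*} (A : Matrix m m ℝ) : Prop :=
  ∀ i j : m, i ≠ j → ∃ (r : ℕ) (p : ℕ → m), p 0 = i ∧ p r = j ∧
    ∀ k < r, A (p k) (p (k+1)) ≠ 0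

/-- Spectral radius of a real matrix: supremum of the moduli of its complex eigenvalues. -/
def specRad {m : Type*} [Fintype m] [DecidableEq m] (A : Matrix m m ℝ) : ℝ :=
  sSup ((fun z : ℂ => ‖z‖) '' (spectrum ℂ (A.map (algebraMap ℝ ℂ))))

/-- `A` is an M-matrix: `A = s•I − B` with `B ≥ 0` entrywise and `ρ(B) ≤ s`. -/
def IsMMatrix {m : Type*} [Fintype m] [DecidableEq m] (A : Matrix m m ℝ) : Prop :=
  ∃ (s : ℝ) (B : Matrix m m ℝ), (∀ i j, 0 ≤ B i j) ∧ specRad B ≤ s ∧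
    A = s • (1 : Matrix m m ℝ) - B

/-- `A = M − N` is a regular splitting: `M` invertible, `M⁻¹ ≥ 0`, `N ≥ 0`. -/
def RegSplit {n : ℕ} (A M N : Matrix (Fin n) (Fin n) ℝ) : Prop :=
  A = M - N ∧ IsUnit M.det ∧ (∀ i j, 0 ≤ M⁻¹ i j) ∧ (∀ i j, 0 ≤ N i j)

/-- The complex characteristic roots (eigenvalues with algebraic multiplicity)
of a real matrix. -/
def cRoots {n : ℕ} (Y : Matrix (Fin n) (Fin n) ℝ) : Multiset ℂ :=
  ((Y.map (algebraMap ℝ ℂ)).charpoly).roots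

/-- substochastic matrix -/
def Substoch {n : ℕ} (W : Matrix (Fin n) (Fin n) ℝ) : Prop :=
  (∀ i j, 0 ≤ W i j) ∧ ∀ i, ∑ j, W i j ≤ 1

/-- stochastic matrix -/
def StochMat {n : ℕ} (W : Matrix (Fin n) (Fin n) ℝ) : Prop :=
  (∀ i j, 0 ≤ W i j) ∧ ∀ i, ∑ j, W i j = 1

/-- subgenerator -/
def IsSubGen {n : ℕ} (Y : Matrix (Fin n) (Fin n) ℝ) : Prop :=
  (∀ i j, i ≠ j → 0 ≤ Y i j) ∧ ∀ i, ∑ j, Y i j ≤ 0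

/-- generator -/
def IsGen {n : ℕ} (Y : Matrix (Fin n) (Fin n) ℝ) : Prop :=
  (∀ i j, i ≠ j → 0 ≤ Y i j) ∧ ∀ i, ∑ j, Y i j = 0

/-- The data of a Markov-modulated Lévy process: phase generator `Q`, Brownian
drifts `a` and volatilities `s` (denoted `σ` in the paper), Lévy densities `ν`,
phase-change jump densities `μ`, and `U0 = U(0)` (the atoms at 0 of the jump
distributions). -/
structure Dat (n : ℕ) where
  Q : Matrix (Fin n) (Fin n) ℝ
  a : Fin n → ℝ
  s : Fin n → ℝ
  ν : Fin n → ℝ → ℝ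
  μ : Fin n → Fin n → ℝ → ℝ
  U0 : Matrix (Fin n) (Fin n) ℝ

namespace Dat

variable {n : ℕ} (D : Dat n)

/-- The standing assumptions of the paper. -/
structure Good : Prop where
  hn : 1 ≤ n
  hQoff : ∀ i j, i ≠ j → 0 ≤ D.Q i j
  hQrow : ∀ i, ∑ j, D.Q i j = 0
  hQirr : MatIrr D.Q
  hs : ∀ i, 0 < D.s i
  hνc : ∀ i, ContinuousOn (D.ν i) (Set.Ioi 0)
  hν0 : ∀ i, ∀ x ∈ Set.Ioi (0:ℝ), 0 ≤ D.ν i x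
  hνi : ∀ i, IntegrableOn (D.ν i) (Set.Ioi 0)
  hU0d : ∀ i, D.U0 i i = 1
  hU0o : ∀ i j, i ≠ j → D.U0 i j ∈ Set.Icc (0:ℝ) 1
  hμc : ∀ i j, i ≠ j → ContinuousOn (D.μ i j) (Set.Ioi 0)
  hμ0 : ∀ i j, ∀ x ∈ Set.Ioi (0:ℝ), 0 ≤ D.μ i j x
  hμi : ∀ i j, i ≠ j → IntegrableOn (D.μ i j) (Set.Ioi 0)
  hμU : ∀ i j, i ≠ j → D.U0 i j + ∫ x in Set.Ioi (0:ℝ), D.μ i j x = 1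
  hμd : ∀ i x, D.μ i i x = 0

/-- `Δ_a`. -/
def Da : Matrix (Fin n) (Fin n) ℝ := Matrix.diagonal D.a

/-- `Δ_{σ²}`. -/
def Ds : Matrix (Fin n) (Fin n) ℝ := Matrix.diagonal fun i => (D.s i)^2

/-- `Δ_ν(x)`. -/
def Dν (x : ℝ) : Matrix (Fin n) (Fin n) ℝ := Matrix.diagonal fun i => D.ν i x

/-- `Q ∘ μ(x)` (Hadamard product). -/
def Qμ (x : ℝ) : Matrix (Fin n) (Fin n) ℝ := Matrix.of fun i j => D.Q i j * D.μ i j x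

/-- The matrix function `F`. -/
def F (Y : Matrix (Fin n) (Fin n) ℝ) : Matrix (Fin n) (Fin n) ℝ :=
  D.Da * Y + (1/2 : ℝ) • (D.Ds * (Y * Y))
    + intP (fun x => D.Dν x * (mexp (x • Y) - 1))
    + Matrix.hadamard D.Q D.U0
    + intP (fun x => D.Qμ x * mexp (x • Y))

/-- The drift `κ`, relative to the stationary vector `π` of `Q`. -/
def kappa (π : Fin n → ℝ) : ℝ :=
  ∑ i, π i * (D.a i + (∫ x in Set.Ioi (0:ℝ), x * D.ν i x)
    + ∑ j, D.Q i j * ∫ x in Set.Ioi (0:ℝ), x * D.μ i j x)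

/-- `π` is the (positive) stationary probability vector of `Q`. -/
def IsStat (π : Fin n → ℝ) : Prop :=
  (∀ i, 0 < π i) ∧ (∀ j, ∑ i, π i * D.Q i j = 0) ∧ ∑ i, π i = 1

/-- `H(τ, W)`. -/
def H (τ : ℝ) (W : Matrix (Fin n) (Fin n) ℝ) : Matrix (Fin n) (Fin n) ℝ :=
  intP (fun x => D.Dν x * (mexp ((τ⁻¹ * x) • (W - 1)) - 1))

/-- `K(τ, W)`. -/
def K (τ : ℝ) (W : Matrix (Fin n) (Fin n) ℝ) : Matrix (Fin n) (Fin n) ℝ :=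
  Matrix.hadamard D.Q D.U0 + intP (fun x => D.Qμ x * mexp ((τ⁻¹ * x) • (W - 1)))

/-- `B_1`. -/
def B1 : Matrix (Fin n) (Fin n) ℝ := D.Ds

/-- `B_0(τ)`. -/
def B0 (τ : ℝ) : Matrix (Fin n) (Fin n) ℝ := (2*τ) • D.Da - (2:ℝ) • D.Ds

/-- `B_{-1}(τ, W)`. -/
def Bm1 (τ : ℝ) (W : Matrix (Fin n) (Fin n) ℝ) : Matrix (Fin n) (Fin n) ℝ :=
  D.Ds - (2*τ) • D.Da + (2*τ^2) • (D.H τ W + D.K τ W)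

/-- Equation (QW): `B₁W² + B₀(τ)W + B₋₁(τ,W) = 0`. -/
def QW (τ : ℝ) (W : Matrix (Fin n) (Fin n) ℝ) : Prop :=
  D.B1 * (W * W) + D.B0 τ * W + D.Bm1 τ W = 0

/-- `B̃_{-1}(τ, W) = −B₀(τ)⁻¹ B₋₁(τ,W)`. -/
def Btm1 (τ : ℝ) (W : Matrix (Fin n) (Fin n) ℝ) : Matrix (Fin n) (Fin n) ℝ :=
  -(D.B0 τ)⁻¹ * D.Bm1 τ W

/-- `B̃_1(τ) = −B₀(τ)⁻¹ B₁`. -/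
def Bt1 (τ : ℝ) : Matrix (Fin n) (Fin n) ℝ := -(D.B0 τ)⁻¹ * D.B1

/-- `0 < τ < τ*`: `troot i` is the unique positive root `τ_i` of the quadratic
`σ_i² − 2τ a_i + 2τ²(q_ii − ∫_0^∞ ν_i)`, `τ` is positive, `τ < σ_i²/a_i` whenever
`a_i > 0`, and `τ < τ_i` for all `i`. -/
def TauOK (troot : Fin n → ℝ) (τ : ℝ) : Prop :=
  (∀ i, 0 < troot i ∧
      (D.s i)^2 - 2 * troot i * D.a i
        + 2 * (troot i)^2 * (D.Q i i - ∫ x in Set.Ioi (0:ℝ), D.ν i x) = 0 ∧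
      ∀ t > 0, (D.s i)^2 - 2 * t * D.a i
        + 2 * t^2 * (D.Q i i - ∫ x in Set.Ioi (0:ℝ), D.ν i x) = 0 → t = troot i) ∧
  0 < τ ∧ (∀ i, 0 < D.a i → τ < (D.s i)^2 / D.a i) ∧ (∀ i, τ < troot i)

/-- `ρ_i = ∫_0^∞ ν_i`. -/
def rho (i : Fin n) : ℝ := ∫ x in Set.Ioi (0:ℝ), D.ν i x

/-- `λ_i = ρ_i + |q_ii|`. -/
def lam (i : Fin n) : ℝ := D.rho i + |D.Q i i|

/-- `b_i`. -/
def b (i : Fin n) : ℝ := (Real.sqrt ((D.a i)^2 + 2 * D.lam i * (D.s i)^2) + D.a i) / (D.s i)^2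

/-- `c_i`. -/
def c (i : Fin n) : ℝ := D.b i - 2 * D.a i / (D.s i)^2

/-- `Ĉ(X)`. -/
def Chat (X : Matrix (Fin n) (Fin n) ℝ) : Matrix (Fin n) (Fin n) ℝ :=
  Matrix.hadamard (D.Q - Matrix.diagonal fun i => D.Q i i) D.U0
    + intP (fun x => D.Dν x * mexp (x • (X - Matrix.diagonal D.b)))
    + intP (fun x => D.Qμ x * mexp (x • (X - Matrix.diagonal D.b)))

/-- `NARE(W)`: the Riccati equation `S² − Δ_c S − S Δ_b + 2Δ_{σ²}⁻¹ Ĉ(W) = 0` in `S`. -/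
def NARE (W S : Matrix (Fin n) (Fin n) ℝ) : Prop :=
  S * S - Matrix.diagonal D.c * S - S * Matrix.diagonal D.b
    + (2:ℝ) • (Matrix.diagonal (fun i => ((D.s i)^2)⁻¹) * D.Chat W) = 0

/-- `S` is the minimal nonnegative solution of `NARE(W)`. -/
def MinSolNARE (W S : Matrix (Fin n) (Fin n) ℝ) : Prop :=
  (∀ i j, 0 ≤ S i j) ∧ D.NARE W S ∧
    ∀ T, (∀ i j, 0 ≤ T i j) → D.NARE W T → ∀ i j, S i j ≤ T i j

/-- `Λ` (relative to `G`). -/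
def Lam (G : Matrix (Fin n) (Fin n) ℝ) : Matrix (Fin n) (Fin n) ℝ :=
  intP (fun x => D.Dν x * cumExp G x) + intP (fun x => D.Qμ x * cumExp G x)

/-- `Θ = −2Δ_a − Δ_{σ²}G − 2Λ` (relative to `G`). -/
def Theta (G : Matrix (Fin n) (Fin n) ℝ) : Matrix (Fin n) (Fin n) ℝ :=
  (-2 : ℝ) • D.Da - D.Ds * G - (2:ℝ) • D.Lam G

/-- Integrability of the first moments `∫ x ν_i(x) dx`, `∫ x μ_ij(x) dx`. -/
def Moments : Prop :=
  (∀ i, IntegrableOn (fun x => x * D.ν i x) (Set.Ioi (0:ℝ))) ∧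
  (∀ i j, IntegrableOn (fun x => x * D.μ i j x) (Set.Ioi (0:ℝ)))

end Dat

/-!
For `t ≥ 0` write `e^{t(W - I)} = e^{-t} e^{tW}`. If `W` is substochastic then `e^{tW}` is
entrywise nonnegative and `e^{tW} 1 ≤ e^t 1` (compare the exponential series termwise), so
`e^{t(W - I)}` is substochastic; if `W` is stochastic, `(W - I) 1 = 0` gives `e^{t(W - I)} 1 = 1`.
Multiplying a nonnegative integrable kernel on the right by a substochastic (stochastic) matrix
can only decrease (preserves) its row sums, so the row sums of `K(τ, W)` are at most (equal to)
those of `Q ∘ U(0) + ∫ Q ∘ μ = Q`, i.e. `0`; likewise those of `H(τ, W) = ∫ Δ_ν e^{…} - ∫ Δ_ν`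
are at most `0`.
-/

open scoped Nat
open NormedSpace Set

theorem Real.hasSum_exp_smul {E : Type*} [AddCommGroup E] [Module ℝ E] [TopologicalSpace E]
    [ContinuousSMul ℝ E] (c : ℝ) (v : E) :
    HasSum (fun k : ℕ => (k !⁻¹ : ℝ) • c ^ k • v) (Real.exp c • v) := by
  rw [Real.exp_eq_exp_ℝ]
  simpa [smul_smul] using (exp_series_hasSum_exp' (𝕂 := ℝ) c).smul_const v

namespace Matrix

theorem sum_apply_eq_mulVec_one {l m : Type*} [Fintype m] (M : Matrix l m ℝ) (i : l) :
    ∑ j, M i j = (M *ᵥ 1) i := by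
  simp [mulVec, dotProduct]

variable {m : Type*} [Fintype m] [DecidableEq m]

theorem hasSum_exp (A : Matrix m m ℝ) : HasSum (fun k => (k !⁻¹ : ℝ) • A ^ k) (exp A) := by
  let := Matrix.linftyOpNormedRing (n := m) (α := ℝ)
  let := Matrix.linftyOpNormedAlgebra (n := m) (R := ℝ) (α := ℝ)
  exact exp_series_hasSum_exp' A

theorem continuous_exp : Continuous (exp : Matrix m m ℝ → Matrix m m ℝ) := by
  let := Matrix.linftyOpNormedRing (n := m) (α := ℝ)
  let := Matrix.linftyOpNormedAlgebra (n := m) (R := ℝ) (α := ℝ)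
  let _ : NormedAlgebra ℚ (Matrix m m ℝ) := .restrictScalars ℚ ℝ _
  exact exp_continuous

theorem hasSum_exp_mulVec (A : Matrix m m ℝ) (v : m → ℝ) :
    HasSum (fun k => (k !⁻¹ : ℝ) • (A ^ k *ᵥ v)) (exp A *ᵥ v) := by
  have := (hasSum_exp A).map (mulVec.addMonoidHomLeft v)
    (continuous_id.matrix_mulVec continuous_const)
  simpa [Function.comp_def, mulVec.addMonoidHomLeft, smul_mulVec] using this

theorem exp_mulVec_of_mulVec_eq_zero {A : Matrix m m ℝ} {v : m → ℝ} (h : A *ᵥ v = 0) :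
    exp A *ᵥ v = v := by
  refine (hasSum_exp_mulVec A v).unique ?_
  convert hasSum_single (f := fun k : ℕ => (k !⁻¹ : ℝ) • (A ^ k *ᵥ v)) 0 fun k hk => ?_
  · simp
  · obtain ⟨k, rfl⟩ := Nat.exists_eq_succ_of_ne_zero hk
    simp [pow_succ, ← mulVec_mulVec, h]

theorem pow_mulVec_le {A : Matrix m m ℝ} (hA : ∀ i j, 0 ≤ A i j) {v : m → ℝ} {c : ℝ}
    (hc : 0 ≤ c) (h : A *ᵥ v ≤ c • v) (k : ℕ) : A ^ k *ᵥ v ≤ c ^ k • v := by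
  induction k with
  | zero => simp
  | succ k ih =>
    calc A ^ (k + 1) *ᵥ v = A *ᵥ (A ^ k *ᵥ v) := by rw [pow_succ', mulVec_mulVec]
      _ ≤ A *ᵥ (c ^ k • v) := fun i => Finset.sum_le_sum fun j _ =>
          mul_le_mul_of_nonneg_left (ih j) (hA i j)
      _ = c ^ k • (A *ᵥ v) := mulVec_smul _ _ _
      _ ≤ c ^ k • c • v := smul_le_smul_of_nonneg_left h (pow_nonneg hc k)
      _ = c ^ (k + 1) • v := by rw [smul_smul, pow_succ]

theorem exp_mulVec_le {A : Matrix m m ℝ} (hA : ∀ i j, 0 ≤ A i j) {v : m → ℝ} {c : ℝ}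
    (hc : 0 ≤ c) (h : A *ᵥ v ≤ c • v) : exp A *ᵥ v ≤ Real.exp c • v :=
  hasSum_le (fun k => smul_le_smul_of_nonneg_left (pow_mulVec_le hA hc h k) (by positivity))
    (hasSum_exp_mulVec A v) (Real.hasSum_exp_smul c v)

theorem exp_apply_nonneg {A : Matrix m m ℝ} (hA : ∀ i j, 0 ≤ A i j) (i j : m) :
    0 ≤ exp A i j :=
  (Pi.hasSum.1 (Pi.hasSum.1 (hasSum_exp A) i) j).nonneg fun k =>
    mul_nonneg (by positivity) (pow_apply_nonneg hA k i j)

theorem exp_smul_one (c : ℝ) : exp (c • (1 : Matrix m m ℝ)) = Real.exp c • 1 :=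
  (hasSum_exp _).unique (by simpa [smul_pow] using Real.hasSum_exp_smul c (1 : Matrix m m ℝ))

theorem exp_smul_sub_one (A : Matrix m m ℝ) (t : ℝ) :
    exp (t • (A - 1)) = Real.exp (-t) • exp (t • A) := by
  have hsplit : t • (A - 1) = (-t) • (1 : Matrix m m ℝ) + t • A := by module
  rw [hsplit, exp_add_of_commute _ _ ((Commute.one_left _).smul_left _), exp_smul_one,
    smul_mul_assoc, one_mul]

end Matrix

variable {n : ℕ}

theorem StochMat.substoch {W : Matrix (Fin n) (Fin n) ℝ} (hW : StochMat W) : Substoch W :=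
  ⟨hW.1, fun i => (hW.2 i).le⟩

theorem Substoch.apply_le_one {W : Matrix (Fin n) (Fin n) ℝ} (hW : Substoch W) (i j : Fin n) :
    W i j ≤ 1 :=
  (Finset.single_le_sum (fun k _ => hW.1 i k) (Finset.mem_univ j)).trans (hW.2 i)

theorem Substoch.mexp_smul_sub_one {W : Matrix (Fin n) (Fin n) ℝ} (hW : Substoch W) {t : ℝ}
    (ht : 0 ≤ t) : Substoch (mexp (t • (W - 1))) := by
  have htW : ∀ i j, 0 ≤ (t • W) i j := fun i j => mul_nonneg ht (hW.1 i j)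
  have hrow : (t • W) *ᵥ 1 ≤ t • 1 := fun i => by
    simpa [← sum_apply_eq_mulVec_one, Finset.mul_sum] using mul_le_mul_of_nonneg_left (hW.2 i) ht
  have hexp := Matrix.exp_mulVec_le htW ht hrow
  rw [mexp, Matrix.exp_smul_sub_one]
  refine ⟨fun i j => mul_nonneg (Real.exp_pos _).le (Matrix.exp_apply_nonneg htW i j), fun i => ?_⟩
  calc ∑ j, (Real.exp (-t) • exp (t • W)) i j = Real.exp (-t) * (exp (t • W) *ᵥ 1) i := by
        simp [← sum_apply_eq_mulVec_one, Finset.mul_sum]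
    _ ≤ Real.exp (-t) * Real.exp t :=
        mul_le_mul_of_nonneg_left (by simpa using hexp i) (Real.exp_pos _).le
    _ = 1 := by rw [← Real.exp_add, neg_add_cancel, Real.exp_zero]

theorem StochMat.mexp_smul_sub_one {W : Matrix (Fin n) (Fin n) ℝ} (hW : StochMat W) {t : ℝ}
    (ht : 0 ≤ t) : StochMat (mexp (t • (W - 1))) := by
  have hker : (t • (W - 1)) *ᵥ 1 = 0 := funext fun i => by
    simp [← sum_apply_eq_mulVec_one, ← Finset.mul_sum, Finset.sum_sub_distrib, one_apply, hW.2 i]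
  refine ⟨(hW.substoch.mexp_smul_sub_one ht).1, fun i => ?_⟩
  rw [sum_apply_eq_mulVec_one, mexp, Matrix.exp_mulVec_of_mulVec_eq_zero hker]
  rfl

theorem sum_mul_apply (M E : Matrix (Fin n) (Fin n) ℝ) (i : Fin n) :
    ∑ j, (M * E) i j = ∑ k, M i k * ∑ j, E k j := by
  simp only [mul_apply, Finset.mul_sum]
  exact Finset.sum_comm

theorem sum_mul_apply_le {M E : Matrix (Fin n) (Fin n) ℝ} (hM : ∀ i k, 0 ≤ M i k)
    (hE : Substoch E) (i : Fin n) : ∑ j, (M * E) i j ≤ ∑ j, M i j := by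
  rw [sum_mul_apply]
  exact Finset.sum_le_sum fun k _ => mul_le_of_le_one_right (hM i k) (hE.2 k)

theorem sum_mul_apply_of_stochMat (M : Matrix (Fin n) (Fin n) ℝ) {E : Matrix (Fin n) (Fin n) ℝ}
    (hE : StochMat E) (i : Fin n) : ∑ j, (M * E) i j = ∑ j, M i j := by
  simp only [sum_mul_apply, hE.2, mul_one]

theorem intP_sub {f g : ℝ → Matrix (Fin n) (Fin n) ℝ}
    (hf : ∀ i j, IntegrableOn (fun x => f x i j) (Ioi 0))
    (hg : ∀ i j, IntegrableOn (fun x => g x i j) (Ioi 0)) :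
    intP (fun x => f x - g x) = intP f - intP g := by
  ext i j
  exact integral_sub (hf i j) (hg i j)

theorem sum_intP_apply {f : ℝ → Matrix (Fin n) (Fin n) ℝ} {i : Fin n}
    (hf : ∀ j, IntegrableOn (fun x => f x i j) (Ioi 0)) :
    ∑ j, intP f i j = ∫ x in Ioi 0, ∑ j, f x i j :=
  (integral_finsetSum _ fun j _ => hf j).symm

section KernelTimesSubstochastic

variable {M E : ℝ → Matrix (Fin n) (Fin n) ℝ}

theorem integrableOn_mul_apply (hM : ∀ i k, IntegrableOn (fun x => M x i k) (Ioi 0))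
    (hE : Continuous E) (hEs : ∀ x ∈ Ioi (0 : ℝ), Substoch (E x)) (i j : Fin n) :
    IntegrableOn (fun x => (M x * E x) i j) (Ioi 0) := by
  simp only [mul_apply]
  refine integrable_finsetSum _ fun k _ => (hM i k).mul_bdd (c := 1)
    (hE.matrix_elem k j).aestronglyMeasurable
    (ae_restrict_of_forall_mem measurableSet_Ioi fun x hx => ?_)
  rw [Real.norm_eq_abs, abs_le]
  exact ⟨by linarith [(hEs x hx).1 k j], (hEs x hx).apply_le_one k j⟩

theorem intP_mul_apply_nonneg (hM : ∀ x ∈ Ioi (0 : ℝ), ∀ i k, 0 ≤ M x i k)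
    (hEs : ∀ x ∈ Ioi (0 : ℝ), Substoch (E x)) (i j : Fin n) :
    0 ≤ intP (fun x => M x * E x) i j :=
  setIntegral_nonneg measurableSet_Ioi fun x hx => by
    simpa only [mul_apply] using
      Finset.sum_nonneg fun k _ => mul_nonneg (hM x hx i k) ((hEs x hx).1 k j)

theorem sum_intP_mul_apply_le (hM0 : ∀ x ∈ Ioi (0 : ℝ), ∀ i k, 0 ≤ M x i k)
    (hM : ∀ i k, IntegrableOn (fun x => M x i k) (Ioi 0))
    (hE : Continuous E) (hEs : ∀ x ∈ Ioi (0 : ℝ), Substoch (E x)) (i : Fin n) :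
    ∑ j, intP (fun x => M x * E x) i j ≤ ∑ j, intP M i j := by
  rw [sum_intP_apply (integrableOn_mul_apply hM hE hEs i), sum_intP_apply (hM i)]
  exact setIntegral_mono_on
    (integrable_finsetSum _ fun j _ => integrableOn_mul_apply hM hE hEs i j)
    (integrable_finsetSum _ fun j _ => hM i j) measurableSet_Ioi
    fun x hx => sum_mul_apply_le (hM0 x hx) (hEs x hx) i

theorem sum_intP_mul_apply_of_stochMat (hM : ∀ i k, IntegrableOn (fun x => M x i k) (Ioi 0))
    (hE : Continuous E) (hEs : ∀ x ∈ Ioi (0 : ℝ), StochMat (E x)) (i : Fin n) :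
    ∑ j, intP (fun x => M x * E x) i j = ∑ j, intP M i j := by
  rw [sum_intP_apply (integrableOn_mul_apply hM hE (fun x hx => (hEs x hx).substoch) i),
    sum_intP_apply (hM i)]
  exact setIntegral_congr_fun measurableSet_Ioi
    fun x hx => sum_mul_apply_of_stochMat (M x) (hEs x hx) i

end KernelTimesSubstochastic

theorem continuous_mexp_smul_sub_one (τ : ℝ) (W : Matrix (Fin n) (Fin n) ℝ) :
    Continuous fun x : ℝ => mexp ((τ⁻¹ * x) • (W - 1)) :=
  Matrix.continuous_exp.comp (by fun_prop)

theorem Substoch.mexp_inv_mul_smul_sub_one {W : Matrix (Fin n) (Fin n) ℝ} (hW : Substoch W)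
    {τ : ℝ} (hτ : 0 < τ) : ∀ x ∈ Ioi (0 : ℝ), Substoch (mexp ((τ⁻¹ * x) • (W - 1))) :=
  fun _ hx => hW.mexp_smul_sub_one (mul_nonneg (inv_nonneg.2 hτ.le) (le_of_lt hx))

theorem StochMat.mexp_inv_mul_smul_sub_one {W : Matrix (Fin n) (Fin n) ℝ} (hW : StochMat W)
    {τ : ℝ} (hτ : 0 < τ) : ∀ x ∈ Ioi (0 : ℝ), StochMat (mexp ((τ⁻¹ * x) • (W - 1))) :=
  fun _ hx => hW.mexp_smul_sub_one (mul_nonneg (inv_nonneg.2 hτ.le) (le_of_lt hx))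

namespace Dat.Good

variable {D : Dat n}

theorem Qμ_apply_nonneg (hD : D.Good) : ∀ x ∈ Ioi (0 : ℝ), ∀ i k, 0 ≤ D.Qμ x i k := by
  intro x hx i k
  rcases eq_or_ne i k with rfl | hik
  · simp [Qμ, hD.hμd]
  · exact mul_nonneg (hD.hQoff i k hik) (hD.hμ0 i k x hx)

theorem integrableOn_Qμ_apply (hD : D.Good) (i k : Fin n) :
    IntegrableOn (fun x => D.Qμ x i k) (Ioi 0) := by
  rcases eq_or_ne i k with rfl | hik
  · simp [Qμ, hD.hμd]
  · exact (hD.hμi i k hik).const_mul (D.Q i k)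

theorem hadamard_add_intP_Qμ (hD : D.Good) : D.Q ⊙ D.U0 + intP D.Qμ = D.Q := by
  ext i k
  simp only [Matrix.add_apply, hadamard_apply, intP, Qμ, of_apply, integral_const_mul, ← mul_add]
  rcases eq_or_ne i k with rfl | hik
  · simp [hD.hU0d, hD.hμd]
  · rw [hD.hμU i k hik, mul_one]

theorem Dν_apply_nonneg (hD : D.Good) : ∀ x ∈ Ioi (0 : ℝ), ∀ i k, 0 ≤ D.Dν x i k := by
  intro x hx i k
  rcases eq_or_ne i k with rfl | hik
  · simpa [Dν] using hD.hν0 i x hx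
  · simp [Dν, diagonal_apply_ne _ hik]

theorem integrableOn_Dν_apply (hD : D.Good) (i k : Fin n) :
    IntegrableOn (fun x => D.Dν x i k) (Ioi 0) := by
  rcases eq_or_ne i k with rfl | hik
  · simpa [Dν] using hD.hνi i
  · simp [Dν, diagonal_apply_ne _ hik]

theorem sum_hadamard_apply_add_sum_intP_Qμ_apply (hD : D.Good) (i : Fin n) :
    ∑ j, (D.Q ⊙ D.U0) i j + ∑ j, intP D.Qμ i j = 0 := by
  rw [← Finset.sum_add_distrib]
  simpa only [← Matrix.add_apply, hD.hadamard_add_intP_Qμ] using hD.hQrow i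

variable {τ : ℝ} {W : Matrix (Fin n) (Fin n) ℝ}

theorem K_apply_nonneg (hD : D.Good) (hτ : 0 < τ) (hW : Substoch W) {i j : Fin n}
    (hij : i ≠ j) : 0 ≤ D.K τ W i j :=
  add_nonneg (mul_nonneg (hD.hQoff i j hij) (hD.hU0o i j hij).1)
    (intP_mul_apply_nonneg hD.Qμ_apply_nonneg (hW.mexp_inv_mul_smul_sub_one hτ) i j)

theorem sum_K_apply (i : Fin n) : ∑ j, D.K τ W i j =
    ∑ j, (D.Q ⊙ D.U0) i j + ∑ j, intP (fun x => D.Qμ x * mexp ((τ⁻¹ * x) • (W - 1))) i j :=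
  Finset.sum_add_distrib

theorem K_isSubGen (hD : D.Good) (hτ : 0 < τ) (hW : Substoch W) : IsSubGen (D.K τ W) := by
  refine ⟨fun i j hij => hD.K_apply_nonneg hτ hW hij, fun i => ?_⟩
  calc ∑ j, D.K τ W i j ≤ ∑ j, (D.Q ⊙ D.U0) i j + ∑ j, intP D.Qμ i j := by
        rw [sum_K_apply]
        exact (add_le_add_iff_left _).2 (sum_intP_mul_apply_le hD.Qμ_apply_nonneg
          hD.integrableOn_Qμ_apply (continuous_mexp_smul_sub_one τ W)
          (hW.mexp_inv_mul_smul_sub_one hτ) i)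
    _ = 0 := hD.sum_hadamard_apply_add_sum_intP_Qμ_apply i

theorem K_isGen (hD : D.Good) (hτ : 0 < τ) (hW : StochMat W) : IsGen (D.K τ W) := by
  refine ⟨fun i j hij => hD.K_apply_nonneg hτ hW.substoch hij, fun i => ?_⟩
  rw [sum_K_apply, sum_intP_mul_apply_of_stochMat hD.integrableOn_Qμ_apply
    (continuous_mexp_smul_sub_one τ W) (hW.mexp_inv_mul_smul_sub_one hτ) i]
  exact hD.sum_hadamard_apply_add_sum_intP_Qμ_apply i

theorem sum_H_apply_nonpos (hD : D.Good) (hτ : 0 < τ) (hW : Substoch W) (i : Fin n) :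
    ∑ j, D.H τ W i j ≤ 0 := by
  have hE := continuous_mexp_smul_sub_one τ W
  have hEs := hW.mexp_inv_mul_smul_sub_one hτ
  have hH : D.H τ W = intP (fun x => D.Dν x * mexp ((τ⁻¹ * x) • (W - 1))) - intP D.Dν := by
    rw [← intP_sub (integrableOn_mul_apply hD.integrableOn_Dν_apply hE hEs)
      hD.integrableOn_Dν_apply]
    simp only [H, mul_sub, mul_one]
  rw [hH]
  simp only [Matrix.sub_apply, Finset.sum_sub_distrib, sub_nonpos]
  exact sum_intP_mul_apply_le hD.Dν_apply_nonneg hD.integrableOn_Dν_apply hE hEs i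

end Dat.Good

/-- `K(τ,W)` is a (sub)generator and `H(τ,W)𝟙 ≤ 0`. -/
theorem stmt3 {n : ℕ} (D : Dat n) (hD : D.Good) (τ : ℝ) (hτ : 0 < τ) :
    (∀ W, Substoch W → IsSubGen (D.K τ W) ∧ ∀ i, ∑ j, D.H τ W i j ≤ 0) ∧
    (∀ W, StochMat W → IsGen (D.K τ W)) :=
  ⟨fun _ hW => ⟨hD.K_isSubGen hτ hW, hD.sum_H_apply_nonpos hτ hW⟩,
    fun _ hW => hD.K_isGen hτ hW⟩
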